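/- Let d ≥ 1, let g : ℝ^d → ℂ be smooth, let r > 0, M > 0, and let ℓ ∈ {1, …, d} be an index such that sup_{t ∈ ℝ^d} |(∂^j g/∂t_ℓ^j)(t)| ≤ M r^j for every j ≥ 0. If λ ∈ ℝ^d satisfies π|λ_ℓ| > r, then for every R > 0, |∫_{C_R(0)} e^{2πi⟨λ,t⟩} g(t) dt| ≤ (2R)^{d−1} · M / (π|λ_ℓ| − r). In particular, for λ with |λ_ℓ| ≥ B for a fixed B > r/π, the twisted integrals of g grow at most like R^{d−1}. -/

import Mathlib

open MeasureTheory

noncomputable section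

/-- The cube `C_R(0) = [-R, R]^d` in `ℝ^d`. -/
def cube (d : ℕ) (R : ℝ) : Set (EuclideanSpace ℝ (Fin d)) :=
  {t | ∀ i, |t i| ≤ R}

/-- Partial derivative in the `ℓ`-th coordinate direction. -/
def pderivDir {d : ℕ} (ℓ : Fin d) (g : EuclideanSpace ℝ (Fin d) → ℂ) :
    EuclideanSpace ℝ (Fin d) → ℂ :=
  fun t => fderiv ℝ g t (EuclideanSpace.single ℓ 1)

/-!
By Fubini, the cube integral is an integral over the face `[-R, R]^{d-1}` of integrals along
lines parallel to `e_ℓ`, so it suffices to bound each line integral by `M / (π|λ_ℓ| - r)`.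
On such a line the phase is a unimodular constant times `e^{iωs}` with `ω = 2πλ_ℓ`.
Integrating by parts against `e^{iωs}` bounds the integral `F_j` of `e^{iωs} ∂_ℓ^j g` by
`(2 M r^j + F_{j+1}) / |ω|`; unrolling this recursion and using the trivial bound
`F_N ≤ 2R M r^N` gives the geometric series `2M / (|ω| - r) ≤ M / (π|λ_ℓ| - r)`.
-/

open Filter Topology Complex WithLp

theorem le_div_sub_of_le_add_div {F : ℕ → ℝ} {a K r ρ : ℝ} (hr : 0 ≤ r) (hrρ : r < ρ)
    (hstep : ∀ j, F j ≤ (a * r ^ j + F (j + 1)) / ρ) (hF : ∀ j, F j ≤ K * r ^ j) :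
    F 0 ≤ a / (ρ - r) := by
  have hρ : 0 < ρ := hr.trans_lt hrρ
  have hρr : ρ - r ≠ 0 := (sub_pos.2 hrρ).ne'
  set q := r / ρ
  have telescoped : ∀ N, F 0 ≤ a / (ρ - r) * (1 - q ^ N) + F N / ρ ^ N := by
    intro N
    induction N with
    | zero => simp
    | succ N ih =>
      calc F 0 ≤ a / (ρ - r) * (1 - q ^ N) + F N / ρ ^ N := ih
        _ ≤ a / (ρ - r) * (1 - q ^ N) + (a * r ^ N + F (N + 1)) / ρ / ρ ^ N := by
          gcongr; exact hstep N
        _ = a / (ρ - r) * (1 - q ^ (N + 1)) + F (N + 1) / ρ ^ (N + 1) := by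
          simp only [q, div_pow]; field_simp; ring
  have tail : ∀ N, F N / ρ ^ N ≤ K * q ^ N := fun N => by
    rw [div_pow, ← mul_div_assoc, div_le_div_iff_of_pos_right (by positivity)]
    exact hF N
  have hq : Tendsto (fun N => q ^ N) atTop (𝓝 0) :=
    tendsto_pow_atTop_nhds_zero_of_lt_one (by positivity) ((div_lt_one hρ).2 hrρ)
  have hlim : Tendsto (fun N => a / (ρ - r) * (1 - q ^ N) + K * q ^ N) atTop
      (𝓝 (a / (ρ - r))) := by
    simpa using ((hq.const_sub 1).const_mul (a / (ρ - r))).add (hq.const_mul K)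
  exact ge_of_tendsto' hlim fun N => (telescoped N).trans (by gcongr; exact tail N)

theorem norm_intervalIntegral_cexp_mul_le {u u' : ℝ → ℂ} {ω a b : ℝ} (hω : ω ≠ 0)
    (hu : ∀ s, HasDerivAt u (u' s) s) (hu' : IntervalIntegrable u' volume a b) :
    ‖∫ s in a..b, exp (↑(ω * s) * I) * u s‖
      ≤ (‖u a‖ + ‖u b‖ + ‖∫ s in a..b, exp (↑(ω * s) * I) * u' s‖) / |ω| := by
  have hωI : (ω * I : ℂ) ≠ 0 := mul_ne_zero (ofReal_ne_zero.2 hω) I_ne_zero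
  set v : ℝ → ℂ := fun s => exp (↑(ω * s) * I) / (ω * I)
  have hv : ∀ s, HasDerivAt v (exp (↑(ω * s) * I)) s := fun s => by
    have := ((((hasDerivAt_id' s).const_mul ω).ofReal_comp).mul_const I).cexp.div_const (ω * I)
    rwa [mul_one, mul_div_assoc, div_self hωI, mul_one] at this
  have hnv : ∀ s, ‖v s‖ = |ω|⁻¹ := fun s => by
    rw [norm_div, norm_exp_ofReal_mul_I, norm_mul, norm_I, norm_real, Real.norm_eq_abs,
      mul_one, one_div]
  have hexp : Continuous fun s : ℝ => exp (↑(ω * s) * I) := by fun_prop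
  have ibp := intervalIntegral.integral_mul_deriv_eq_deriv_mul (fun s _ => hu s)
    (fun s _ => hv s) hu' (hexp.intervalIntegrable a b)
  have hint : ∫ s in a..b, u' s * v s
      = (∫ s in a..b, exp (↑(ω * s) * I) * u' s) / (ω * I) := by
    rw [← intervalIntegral.integral_div]
    congr 1 with s
    ring
  calc ‖∫ s in a..b, exp (↑(ω * s) * I) * u s‖
      = ‖u b * v b - u a * v a - (∫ s in a..b, exp (↑(ω * s) * I) * u' s) / (ω * I)‖ := by
        rw [← hint, ← ibp]
        simp_rw [mul_comm (exp _)]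
    _ ≤ ‖u b * v b‖ + ‖u a * v a‖ + ‖(∫ s in a..b, exp (↑(ω * s) * I) * u' s) / (ω * I)‖ :=
        (norm_sub_le _ _).trans (add_le_add_left (norm_sub_le _ _) _)
    _ = _ := by
        simp only [norm_mul, norm_div, hnv, norm_I, norm_real, Real.norm_eq_abs, mul_one]
        ring

theorem norm_intervalIntegral_cexp_mul_le_of_forall_iterate {h : ℕ → ℝ → ℂ} {M r ω a b : ℝ}
    (hder : ∀ j s, HasDerivAt (h j) (h (j + 1) s) s) (hb : ∀ j s, ‖h j s‖ ≤ M * r ^ j)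
    (hr : 0 ≤ r) (hω : r < |ω|) :
    ‖∫ s in a..b, exp (↑(ω * s) * I) * h 0 s‖ ≤ 2 * M / (|ω| - r) := by
  set F : ℕ → ℝ := fun j => ‖∫ s in a..b, exp (↑(ω * s) * I) * h j s‖
  have hω0 : ω ≠ 0 := abs_pos.1 (hr.trans_lt hω)
  refine le_div_sub_of_le_add_div (F := F) (K := M * |b - a|) hr hω (fun j => ?_) (fun j => ?_)
  · have hcont : Continuous (h (j + 1)) :=
      continuous_iff_continuousAt.2 fun s => (hder (j + 1) s).continuousAt
    refine (norm_intervalIntegral_cexp_mul_le hω0 (hder j) (hcont.intervalIntegrable a b)).trans ?_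
    gcongr
    linarith [hb j a, hb j b]
  · calc F j ≤ M * r ^ j * |b - a| := intervalIntegral.norm_integral_le_of_norm_le_const
          fun s _ => by rw [norm_mul, norm_exp_ofReal_mul_I, one_mul]; exact hb j s
      _ = M * |b - a| * r ^ j := by ring

theorem isCompact_cube (d : ℕ) (R : ℝ) : IsCompact (cube d R) := by
  have hcube : cube d R
      = PiLp.homeomorph 2 (fun _ : Fin d => ℝ) ⁻¹' Set.univ.pi fun _ => Set.Icc (-R) R := by
    ext t
    simp [cube, abs_le, -Set.pi_univ_Icc]
    rfl
  rw [hcube]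
  exact (Homeomorph.isCompact_preimage _).2 (isCompact_univ_pi fun _ => isCompact_Icc)

theorem contDiff_pderivDir {d : ℕ} {g : EuclideanSpace ℝ (Fin d) → ℂ}
    (hg : ContDiff ℝ (⊤ : ℕ∞) g) (ℓ : Fin d) : ContDiff ℝ (⊤ : ℕ∞) (pderivDir ℓ g) :=
  (hg.fderiv_right (m := (⊤ : ℕ∞)) le_rfl).clm_apply contDiff_const

theorem contDiff_iterate_pderivDir {d : ℕ} {g : EuclideanSpace ℝ (Fin d) → ℂ}
    (hg : ContDiff ℝ (⊤ : ℕ∞) g) (ℓ : Fin d) (j : ℕ) :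
    ContDiff ℝ (⊤ : ℕ∞) ((pderivDir ℓ)^[j] g) := by
  induction j with
  | zero => exact hg
  | succ j ih => rw [Function.iterate_succ_apply']; exact contDiff_pderivDir ih ℓ

def coordLine {n : ℕ} (ℓ : Fin (n + 1)) (w : Fin n → ℝ) (s : ℝ) : EuclideanSpace ℝ (Fin (n + 1)) :=
  toLp 2 (ℓ.insertNth s w)

@[simp]
theorem coordLine_apply_same {n : ℕ} (ℓ : Fin (n + 1)) (w : Fin n → ℝ) (s : ℝ) :
    coordLine ℓ w s ℓ = s := by
  simp [coordLine]

@[simp]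
theorem coordLine_apply_succAbove {n : ℕ} (ℓ : Fin (n + 1)) (w : Fin n → ℝ) (s : ℝ)
    (j : Fin n) : coordLine ℓ w s (ℓ.succAbove j) = w j := by
  simp [coordLine]

theorem coordLine_eq_add_smul {n : ℕ} (ℓ : Fin (n + 1)) (w : Fin n → ℝ) (s : ℝ) :
    coordLine ℓ w s = coordLine ℓ w 0 + s • EuclideanSpace.single ℓ (1 : ℝ) := by
  ext i
  refine ℓ.succAboveCases ?_ (fun j => ?_) i <;> simp

theorem hasDerivAt_coordLine {n : ℕ} (ℓ : Fin (n + 1)) (w : Fin n → ℝ) (s : ℝ) :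
    HasDerivAt (coordLine ℓ w) (EuclideanSpace.single ℓ (1 : ℝ)) s := by
  rw [funext (coordLine_eq_add_smul ℓ w)]
  exact ((hasDerivAt_id s).smul_const _).const_add _ |>.congr_deriv (one_smul _ _)

theorem DifferentiableAt.hasDerivAt_comp_coordLine {n : ℕ}
    {u : EuclideanSpace ℝ (Fin (n + 1)) → ℂ}
    (ℓ : Fin (n + 1)) (w : Fin n → ℝ) {s : ℝ}
    (hu : DifferentiableAt ℝ u (coordLine ℓ w s)) :
    HasDerivAt (fun s => u (coordLine ℓ w s))
      (pderivDir ℓ u (coordLine ℓ w s)) s :=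
  hu.hasFDerivAt.comp_hasDerivAt s (hasDerivAt_coordLine ℓ w s)

theorem norm_setIntegral_cube_le {E : Type*} [NormedAddCommGroup E] [NormedSpace ℝ E] {n : ℕ}
    {f : EuclideanSpace ℝ (Fin (n + 1)) → E} {R B : ℝ} (hR : 0 ≤ R)
    (hf : IntegrableOn f (cube (n + 1) R)) (ℓ : Fin (n + 1))
    (hline : ∀ w ∈ Set.univ.pi fun _ : Fin n => Set.Icc (-R) R,
      ‖∫ s in -R..R, f (coordLine ℓ w s)‖ ≤ B) :
    ‖∫ t in cube (n + 1) R, f t‖ ≤ (2 * R) ^ n * B := by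
  set face : Set (Fin n → ℝ) := Set.univ.pi fun _ => Set.Icc (-R) R
  let Φ : ℝ × (Fin n → ℝ) ≃ᵐ EuclideanSpace ℝ (Fin (n + 1)) :=
    (MeasurableEquiv.piFinSuccAbove (fun _ => ℝ) ℓ).symm.trans (MeasurableEquiv.toLp 2 _)
  have hΦ : MeasurePreserving Φ (volume.prod volume) volume :=
    (PiLp.volume_preserving_toLp _).comp ((volume_preserving_piFinSuccAbove _ ℓ).symm _)
  have hpre : Φ ⁻¹' cube (n + 1) R = Set.Icc (-R) R ×ˢ face := by
    ext ⟨s, w⟩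
    simp [Φ, cube, face, Fin.forall_iff_succAbove ℓ, abs_le, -Set.pi_univ_Icc]
  have hint : Integrable (f ∘ Φ)
      ((volume.restrict (Set.Icc (-R) R)).prod (volume.restrict face)) := by
    rw [Measure.prod_restrict, ← hpre]
    exact hΦ.integrableOn_comp_preimage Φ.measurableEmbedding |>.2 hf
  have hface : volume face = ENNReal.ofReal (2 * R) ^ n := by
    rw [volume_pi_pi]
    simp [Real.volume_Icc, two_mul]
  calc ‖∫ t in cube (n + 1) R, f t‖
      = ‖∫ w in face, ∫ s in -R..R, f (coordLine ℓ w s)‖ := by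
        rw [← hΦ.setIntegral_preimage_emb Φ.measurableEmbedding, hpre, ← Measure.prod_restrict,
          integral_prod_symm (fun z => f (Φ z)) hint]
        simp [Φ, intervalIntegral.integral_of_le (neg_le_self hR), integral_Icc_eq_integral_Ioc]
        rfl
    _ ≤ B * (volume face).toReal :=
        norm_setIntegral_le_of_norm_le_const
          (by rw [hface]; exact ENNReal.pow_lt_top ENNReal.ofReal_lt_top) hline
    _ = (2 * R) ^ n * B := by
        rw [hface, ENNReal.toReal_pow, ENNReal.toReal_ofReal (by positivity), mul_comm]

theorem norm_intervalIntegral_cexp_mul_comp_coordLine_le {n : ℕ}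
    {g : EuclideanSpace ℝ (Fin (n + 1)) → ℂ} (hg : ContDiff ℝ (⊤ : ℕ∞) g) {M r ω : ℝ}
    {ℓ : Fin (n + 1)} (hbound : ∀ j : ℕ, ∀ t, ‖(pderivDir ℓ)^[j] g t‖ ≤ M * r ^ j)
    (hr : 0 ≤ r) (hω : r < |ω|) (w : Fin n → ℝ) (a b : ℝ) :
    ‖∫ s in a..b, exp (↑(ω * s) * I) * g (coordLine ℓ w s)‖ ≤ 2 * M / (|ω| - r) :=
  norm_intervalIntegral_cexp_mul_le_of_forall_iterate
    (h := fun j s => (pderivDir ℓ)^[j] g (coordLine ℓ w s))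
    (fun j s => by
      rw [Function.iterate_succ_apply']
      exact ((contDiff_iterate_pderivDir hg ℓ j).differentiable (by simp)).differentiableAt
        |>.hasDerivAt_comp_coordLine ℓ w)
    (fun j s => hbound j _) hr hω

theorem norm_intervalIntegral_twisted_comp_coordLine_le {n : ℕ}
    {g : EuclideanSpace ℝ (Fin (n + 1)) → ℂ} (hg : ContDiff ℝ (⊤ : ℕ∞) g) {M r : ℝ}
    {ℓ : Fin (n + 1)} (hbound : ∀ j : ℕ, ∀ t, ‖(pderivDir ℓ)^[j] g t‖ ≤ M * r ^ j)
    (hr : 0 ≤ r) {lam : EuclideanSpace ℝ (Fin (n + 1))} (hlam : r < |2 * Real.pi * lam ℓ|)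
    (w : Fin n → ℝ) (a b : ℝ) :
    ‖∫ s in a..b, exp (2 * Real.pi * I * ((∑ i, lam i * coordLine ℓ w s i : ℝ) : ℂ))
        * g (coordLine ℓ w s)‖
      ≤ 2 * M / (|2 * Real.pi * lam ℓ| - r) := by
  have phase : ∀ s : ℝ,
      exp (2 * Real.pi * I * ((∑ i, lam i * coordLine ℓ w s i : ℝ) : ℂ)) * g (coordLine ℓ w s)
        = exp (↑(2 * Real.pi * ∑ j, lam (ℓ.succAbove j) * w j) * I)
          * (exp (↑(2 * Real.pi * lam ℓ * s) * I) * g (coordLine ℓ w s)) := fun s => by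
    rw [← mul_assoc, ← Complex.exp_add]
    simp only [Fin.sum_univ_succAbove _ ℓ, coordLine_apply_same, coordLine_apply_succAbove]
    push_cast
    ring_nf
  simp only [phase, intervalIntegral.integral_const_mul, norm_mul, norm_exp_ofReal_mul_I, one_mul]
  exact norm_intervalIntegral_cexp_mul_comp_coordLine_le hg hbound hr hlam w a b

theorem twisted_integral_gevrey_bound_general
    {d : ℕ} (g : EuclideanSpace ℝ (Fin d) → ℂ)
    (hg : ContDiff ℝ (⊤ : ℕ∞) g) (r M : ℝ) (hr : 0 < r) (hM : 0 < M)
    (ℓ : Fin d)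
    (hbound : ∀ j : ℕ, ∀ t, ‖(pderivDir ℓ)^[j] g t‖ ≤ M * r ^ j)
    (lam : EuclideanSpace ℝ (Fin d)) (hlam : r < Real.pi * |lam ℓ|)
    (R : ℝ) (hR : 0 < R) :
    ‖∫ t in cube d R,
        Complex.exp (2 * Real.pi * Complex.I * ((∑ i, lam i * t i : ℝ) : ℂ)) * g t‖
      ≤ (2 * R) ^ (d - 1) * M / (Real.pi * |lam ℓ| - r) := by
  obtain ⟨n, rfl⟩ := Nat.exists_eq_add_one_of_ne_zero ℓ.pos.ne'
  have hω : |2 * Real.pi * lam ℓ| = 2 * (Real.pi * |lam ℓ|) := by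
    rw [abs_mul, abs_of_pos Real.two_pi_pos, mul_assoc]
  have hline : ∀ w ∈ Set.univ.pi fun _ : Fin n => Set.Icc (-R) R,
      ‖∫ s in -R..R, exp (2 * Real.pi * I * ((∑ i, lam i * coordLine ℓ w s i : ℝ) : ℂ))
          * g (coordLine ℓ w s)‖ ≤ M / (Real.pi * |lam ℓ| - r) := fun w _ =>
    calc _ ≤ 2 * M / (|2 * Real.pi * lam ℓ| - r) :=
          norm_intervalIntegral_twisted_comp_coordLine_le hg hbound hr.le
            (by rw [hω]; linarith) w _ _
      _ ≤ 2 * M / (2 * (Real.pi * |lam ℓ|) - 2 * r) := by rw [hω]; gcongr <;> linarith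
      _ = M / (Real.pi * |lam ℓ| - r) := by rw [← mul_sub, mul_div_mul_left _ _ two_ne_zero]
  have hint : IntegrableOn (fun t : EuclideanSpace ℝ (Fin (n + 1)) =>
      exp (2 * Real.pi * I * ((∑ i, lam i * t i : ℝ) : ℂ)) * g t) (cube (n + 1) R) :=
    (by fun_prop : Continuous _).continuousOn.integrableOn_compact (isCompact_cube _ _)
  simpa [mul_div_assoc] using norm_setIntegral_cube_le hR.le hint ℓ hline

/-- For a smooth function whose iterated partial derivatives in direction `ℓ` grow at most
like `M r^j`, the twisted integral with `π|λ_ℓ| > r` is bounded by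
`(2R)^{d-1} M / (π|λ_ℓ| - r)`. -/
theorem twisted_integral_gevrey_bound
    {d : ℕ} (hd : 1 ≤ d) (g : EuclideanSpace ℝ (Fin d) → ℂ)
    (hg : ContDiff ℝ (⊤ : ℕ∞) g) (r M : ℝ) (hr : 0 < r) (hM : 0 < M)
    (ℓ : Fin d)
    (hbound : ∀ j : ℕ, ∀ t, ‖(pderivDir ℓ)^[j] g t‖ ≤ M * r ^ j)
    (lam : EuclideanSpace ℝ (Fin d)) (hlam : r < Real.pi * |lam ℓ|)
    (R : ℝ) (hR : 0 < R) :
    ‖∫ t in cube d R,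
        Complex.exp (2 * Real.pi * Complex.I * ((∑ i, lam i * t i : ℝ) : ℂ)) * g t‖
      ≤ (2 * R) ^ (d - 1) * M / (Real.pi * |lam ℓ| - r) :=
  twisted_integral_gevrey_bound_general g hg r M hr hM ℓ hbound lam hlam R hR
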